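/- Let f ∈ ℂ[X1, X2] be a polynomial lying in the ℂ-span of the monomials X1^{b1} X2^{b2} with 0 ≤ b1 < a1 and 0 ≤ b2 < a2. Then f satisfies the equivariance condition α1 α2 · f(α1 X1, α2 X2) = f(X1, X2) for every (α1, α2) ∈ G_W if and only if f lies in the ℂ-span of X1^{a1−1} and X2^{a2−1}. In particular, the space of such G_W-equivariant polynomials is 2-dimensional. -/

import Mathlib

/-!
A diagonal scaling `Xᵢ ↦ cᵢ Xᵢ` acts on the monomial `X^d` by the scalar `∏ cᵢ^dᵢ`, so the
equivariant polynomials are spanned by the monomials `X1^b1 X2^b2` on which the character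
`(α1, α2) ↦ α1^(b1+1) α2^(b2+1)` of `G_W` is trivial. Eliminating `α2 = α1^(-a1)` shows that `G_W`
is cyclic of order `N = a1 a2 - 1`, generated by `(ζ, ζ^(-a1))` for a primitive `N`-th root of
unity `ζ`; the character is trivial iff `N ∣ (b1 + 1) - a1 (b2 + 1)`. In the box `b1 < a1`,
`b2 < a2` this integer lies in `[-N, 0]`, and its two admissible values `0` and `-N` give exactly
the monomials `X1^(a1-1)` and `X2^(a2-1)`.
-/

noncomputable section

/-- The maximal group of diagonal symmetries of the two-dimensional loop
potential `W = X1^a1 * X2 + X2^a2 * X1`. -/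
def loopSymGroup (a1 a2 : ℕ) : Subgroup (ℂˣ × ℂˣ) where
  carrier := {p | (p.1 : ℂ) ^ a1 * (p.2 : ℂ) = 1 ∧ (p.2 : ℂ) ^ a2 * (p.1 : ℂ) = 1}
  one_mem' := by simp
  mul_mem' := by
    rintro ⟨x1, x2⟩ ⟨y1, y2⟩ ⟨hx1, hx2⟩ ⟨hy1, hy2⟩
    refine ⟨?_, ?_⟩
    · show ((x1 * y1 : ℂˣ) : ℂ) ^ a1 * ((x2 * y2 : ℂˣ) : ℂ) = 1
      push_cast
      rw [mul_pow]
      calc (x1:ℂ)^a1 * (y1:ℂ)^a1 * ((x2:ℂ) * (y2:ℂ))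
          = ((x1:ℂ)^a1 * x2) * ((y1:ℂ)^a1 * y2) := by ring
        _ = 1 := by rw [hx1, hy1, one_mul]
    · show ((x2 * y2 : ℂˣ) : ℂ) ^ a2 * ((x1 * y1 : ℂˣ) : ℂ) = 1
      push_cast
      rw [mul_pow]
      calc (x2:ℂ)^a2 * (y2:ℂ)^a2 * ((x1:ℂ) * (y1:ℂ))
          = ((x2:ℂ)^a2 * x1) * ((y2:ℂ)^a2 * y1) := by ring
        _ = 1 := by rw [hx2, hy2, one_mul]
  inv_mem' := by
    rintro ⟨x1, x2⟩ ⟨h1, h2⟩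
    refine ⟨?_, ?_⟩
    · show ((x1⁻¹ : ℂˣ) : ℂ) ^ a1 * ((x2⁻¹ : ℂˣ) : ℂ) = 1
      rw [Units.val_inv_eq_inv_val, Units.val_inv_eq_inv_val, inv_pow, ← mul_inv, h1, inv_one]
    · show ((x2⁻¹ : ℂˣ) : ℂ) ^ a2 * ((x1⁻¹ : ℂˣ) : ℂ) = 1
      rw [Units.val_inv_eq_inv_val, Units.val_inv_eq_inv_val, inv_pow, ← mul_inv, h2, inv_one]


open MvPolynomial

section DiagonalScaling

variable {σ R : Type*}

theorem aeval_smul_X_monomial [CommSemiring R] (c : σ → R) (u : σ →₀ ℕ) (r : R) :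
    aeval (fun i => c i • X i) (monomial u r) = (u.prod fun i n => c i ^ n) • monomial u r := by
  rw [aeval_monomial, monomial_eq, algebraMap_eq, Finsupp.prod, Finsupp.prod, Finsupp.prod]
  simp_rw [smul_pow, Finset.prod_smul, mul_smul_comm]

theorem coeff_aeval_smul_X [CommSemiring R] (c : σ → R) (f : MvPolynomial σ R) (d : σ →₀ ℕ) :
    coeff d (aeval (fun i => c i • X i) f) = (d.prod fun i n => c i ^ n) * coeff d f := by
  classical
  induction f using MvPolynomial.induction_on' with
  | monomial u r =>
    rw [aeval_smul_X_monomial, coeff_smul, coeff_monomial, smul_eq_mul]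
    split_ifs with h <;> simp [h]
  | add p q hp hq => rw [map_add, coeff_add, hp, hq, coeff_add, mul_add]

theorem smul_aeval_smul_X_eq_self_iff [CommSemiring R] [IsRightCancelMulZero R] (k : R) (c : σ → R)
    (f : MvPolynomial σ R) :
    k • aeval (fun i => c i • X i) f = f ↔
      ∀ d ∈ f.support, k * d.prod (fun i n => c i ^ n) = 1 := by
  simp only [MvPolynomial.ext_iff, coeff_smul, coeff_aeval_smul_X, smul_eq_mul, ← mul_assoc,
    mem_support_iff]
  refine forall_congr' fun d => ?_
  by_cases hd : coeff d f = 0 <;> simp [hd, mul_eq_right₀]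

theorem smul_aeval_smul_X_fin_two_eq_self_iff [CommSemiring R] [IsRightCancelMulZero R] (k c0 c1 : R)
    (f : MvPolynomial (Fin 2) R) :
    k • aeval ![c0 • X 0, c1 • X 1] f = f ↔ ∀ d ∈ f.support, k * (c0 ^ d 0 * c1 ^ d 1) = 1 := by
  have hvec : ![c0 • X 0, c1 • X 1] = fun i : Fin 2 => ![c0, c1] i • (X i : MvPolynomial _ R) := by
    ext1 i; fin_cases i <;> rfl
  rw [hvec, smul_aeval_smul_X_eq_self_iff]
  simp [Finsupp.prod_fintype, Fin.prod_univ_two]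

end DiagonalScaling

section LoopSymGroup

variable {a1 a2 : ℕ}

theorem mem_loopSymGroup_iff {p : ℂˣ × ℂˣ} :
    p ∈ loopSymGroup a1 a2 ↔ p.1 ^ a1 * p.2 = 1 ∧ p.2 ^ a2 * p.1 = 1 := by
  simp only [Units.ext_iff, Units.val_mul, Units.val_pow_eq_pow_val, Units.val_one]
  rfl

theorem mk_zpow_neg_mem_loopSymGroup {ζ : ℂˣ} (hζ : ζ ^ ((a1 * a2 : ℤ) - 1) = 1) :
    (ζ, ζ ^ (-(a1 : ℤ))) ∈ loopSymGroup a1 a2 := by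
  refine mem_loopSymGroup_iff.2 ⟨by group, ?_⟩
  calc (ζ ^ (-(a1 : ℤ))) ^ a2 * ζ = (ζ ^ ((a1 * a2 : ℤ) - 1))⁻¹ := by group
    _ = 1 := by rw [hζ, inv_one]

theorem dvd_of_forall_mem_loopSymGroup (ha : a1 * a2 ≠ 1) {b1 b2 : ℕ}
    (h : ∀ p ∈ loopSymGroup a1 a2, (p.1 : ℂ) ^ (b1 + 1) * (p.2 : ℂ) ^ (b2 + 1) = 1) :
    ((a1 * a2 : ℤ) - 1) ∣ (b1 + 1 : ℤ) - a1 * (b2 + 1) := by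
  set N : ℤ := a1 * a2 - 1 with hN_def
  have hN : N.natAbs ≠ 0 := by
    rw [Int.natAbs_ne_zero, hN_def, sub_ne_zero]
    exact_mod_cast ha
  have hζ := (Complex.isPrimitiveRoot_exp _ hN).isUnit_unit hN
  set ζ := ((Complex.isPrimitiveRoot_exp _ hN).isUnit hN).unit
  have hζN : ζ ^ N = 1 := (hζ.zpow_eq_one_iff_dvd N).2 Int.natAbs_dvd_self
  have hχ := h _ (mk_zpow_neg_mem_loopSymGroup hζN)
  simp only [← Units.val_pow_eq_pow_val, ← Units.val_mul, Units.val_eq_one] at hχ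
  rw [← Int.natAbs_dvd, ← hζ.zpow_eq_one_iff_dvd, ← hχ]
  group

theorem eq_corner_of_dvd {b1 b2 : ℕ} (hb1 : b1 < a1) (hb2 : b2 < a2)
    (h : ((a1 * a2 : ℤ) - 1) ∣ (b1 + 1 : ℤ) - a1 * (b2 + 1)) :
    (b1 = a1 - 1 ∧ b2 = 0) ∨ (b1 = 0 ∧ b2 = a2 - 1) := by
  zify at hb1 hb2
  have hv : (b1 + 1 : ℤ) - a1 * (b2 + 1) = 0 ∨
      (b1 + 1 : ℤ) - a1 * (b2 + 1) = -(a1 * a2 - 1) := by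
    by_contra! hne
    have hlow : -((a1 : ℤ) * a2 - 1) ≤ (b1 + 1 : ℤ) - a1 * (b2 + 1) := by nlinarith
    have hhigh : (b1 + 1 : ℤ) - a1 * (b2 + 1) ≤ 0 := by nlinarith
    refine hne.1 (Int.eq_zero_of_abs_lt_dvd h (abs_lt.2 ⟨lt_of_le_of_ne hlow hne.2.symm, ?_⟩))
    nlinarith [lt_of_le_of_ne hhigh hne.1]
  rcases hv with hv | hv
  · have hb2 : (b2 : ℤ) = 0 := by nlinarith
    rw [hb2] at hv
    omega
  · have hb1 : (b1 : ℤ) = 0 := by nlinarith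
    have hb2 : (a1 : ℤ) * (a2 - b2 - 1) = 0 := by linarith
    rcases mul_eq_zero.1 hb2 with h | h <;> omega

theorem forall_mem_loopSymGroup_iff (ha : a1 * a2 ≠ 1) {b1 b2 : ℕ} (hb1 : b1 < a1)
    (hb2 : b2 < a2) :
    (∀ p ∈ loopSymGroup a1 a2, (p.1 : ℂ) ^ (b1 + 1) * (p.2 : ℂ) ^ (b2 + 1) = 1) ↔
      (b1 = a1 - 1 ∧ b2 = 0) ∨ (b1 = 0 ∧ b2 = a2 - 1) := by
  refine ⟨fun h => eq_corner_of_dvd hb1 hb2 (dvd_of_forall_mem_loopSymGroup ha h), ?_⟩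
  rintro (⟨rfl, rfl⟩ | ⟨rfl, rfl⟩) p ⟨hp1, hp2⟩
  · rwa [Nat.sub_add_cancel (by omega : 1 ≤ a1), zero_add, pow_one]
  · rwa [Nat.sub_add_cancel (by omega : 1 ≤ a2), zero_add, pow_one, mul_comm]

end LoopSymGroup

theorem support_subset_of_mem_span_box {a1 a2 : ℕ} {f : MvPolynomial (Fin 2) ℂ}
    (hf : f ∈ Submodule.span ℂ
      {m : MvPolynomial (Fin 2) ℂ | ∃ b1 < a1, ∃ b2 < a2, m = X 0 ^ b1 * X 1 ^ b2}) :
    ↑f.support ⊆ {d : Fin 2 →₀ ℕ | d 0 < a1 ∧ d 1 < a2} := by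
  rw [← mem_restrictSupport_iff, restrictSupport_eq_span]
  refine Submodule.span_mono ?_ hf
  rintro _ ⟨b1, hb1, b2, hb2, rfl⟩
  refine ⟨Finsupp.single 0 b1 + Finsupp.single 1 b2, by simpa using ⟨hb1, hb2⟩, ?_⟩
  rw [X_pow_eq_monomial, X_pow_eq_monomial, monomial_mul, one_mul]

theorem loopSymGroup_equivariant_polys_general (a1 a2 : ℕ) (ha1 : 2 ≤ a1)
    (f : MvPolynomial (Fin 2) ℂ)
    (hf : f ∈ Submodule.span ℂ
      {m : MvPolynomial (Fin 2) ℂ | ∃ b1 < a1, ∃ b2 < a2, m = X 0 ^ b1 * X 1 ^ b2}) :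
    ((∀ p ∈ loopSymGroup a1 a2,
        ((p.1 : ℂ) * (p.2 : ℂ)) •
          (aeval ![((p.1 : ℂ)) • (X 0 : MvPolynomial (Fin 2) ℂ),
                   ((p.2 : ℂ)) • (X 1 : MvPolynomial (Fin 2) ℂ)] f) = f) ↔
      f ∈ Submodule.span ℂ
        ({X 0 ^ (a1 - 1), X 1 ^ (a2 - 1)} : Set (MvPolynomial (Fin 2) ℂ))) ∧
    Module.finrank ℂ
      (Submodule.span ℂ
        ({X 0 ^ (a1 - 1), X 1 ^ (a2 - 1)} : Set (MvPolynomial (Fin 2) ℂ))) = 2 := by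
  have ha : a1 * a2 ≠ 1 := fun h => by have := (mul_eq_one.1 h).1; omega
  set e1 : Fin 2 →₀ ℕ := Finsupp.single 0 (a1 - 1)
  set e2 : Fin 2 →₀ ℕ := Finsupp.single 1 (a2 - 1)
  have hspan : Submodule.span ℂ ({X 0 ^ (a1 - 1), X 1 ^ (a2 - 1)} : Set (MvPolynomial (Fin 2) ℂ))
      = restrictSupport ℂ {e1, e2} := by
    rw [restrictSupport_eq_span, Set.image_pair, X_pow_eq_monomial, X_pow_eq_monomial]
  have hbox := support_subset_of_mem_span_box hf
  have hchar : ∀ d ∈ f.support, (∀ p ∈ loopSymGroup a1 a2,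
      (p.1 * p.2 : ℂ) * ((p.1 : ℂ) ^ d 0 * (p.2 : ℂ) ^ d 1) = 1) ↔ d ∈ ({e1, e2} : Set _) := by
    intro d hd
    obtain ⟨hd0, hd1⟩ := hbox hd
    simp only [show ∀ x y : ℂ, x * y * (x ^ d 0 * y ^ d 1) = x ^ (d 0 + 1) * y ^ (d 1 + 1) by
      intros; ring]
    rw [forall_mem_loopSymGroup_iff ha hd0 hd1]
    simp [e1, e2, Finsupp.ext_iff, Fin.forall_fin_two]
  have he : e1 ≠ e2 := fun h => by have := DFunLike.congr_fun h 0; simp [e1, e2] at this; omega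
  refine ⟨?_, ?_⟩
  · simp_rw [hspan, mem_restrictSupport_iff, smul_aeval_smul_X_fin_two_eq_self_iff]
    rw [forall₂_comm]
    exact forall₂_congr hchar
  · rw [hspan, Module.finrank_eq_nat_card_basis (basisRestrictSupport ℂ _), Nat.card_coe_set_eq,
      Set.ncard_pair he]

/-- A polynomial `f` in the span of the monomials `X1^b1 * X2^b2`
(`0 ≤ b1 < a1`, `0 ≤ b2 < a2`) satisfies the `G_W`-equivariance condition
`α1 α2 · f(α1 X1, α2 X2) = f` for all `(α1, α2) ∈ G_W` iff `f` lies in the span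
of `X1^(a1-1)` and `X2^(a2-1)`; in particular this space is 2-dimensional. -/
theorem loopSymGroup_equivariant_polys (a1 a2 : ℕ) (ha1 : 2 ≤ a1) (ha2 : 2 ≤ a2)
    (f : MvPolynomial (Fin 2) ℂ)
    (hf : f ∈ Submodule.span ℂ
      {m : MvPolynomial (Fin 2) ℂ | ∃ b1 < a1, ∃ b2 < a2, m = X 0 ^ b1 * X 1 ^ b2}) :
    ((∀ p ∈ loopSymGroup a1 a2,
        ((p.1 : ℂ) * (p.2 : ℂ)) •
          (aeval ![((p.1 : ℂ)) • (X 0 : MvPolynomial (Fin 2) ℂ),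
                   ((p.2 : ℂ)) • (X 1 : MvPolynomial (Fin 2) ℂ)] f) = f) ↔
      f ∈ Submodule.span ℂ
        ({X 0 ^ (a1 - 1), X 1 ^ (a2 - 1)} : Set (MvPolynomial (Fin 2) ℂ))) ∧
    Module.finrank ℂ
      (Submodule.span ℂ
        ({X 0 ^ (a1 - 1), X 1 ^ (a2 - 1)} : Set (MvPolynomial (Fin 2) ℂ))) = 2 :=
  loopSymGroup_equivariant_polys_general a1 a2 ha1 f hf

end
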